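/- For N ≥ 1, the index of Γ(N) in SL(2,ℤ) equals N³ · ∏_{p prime, p ∣ N} (1 − 1/p²). -/

import Mathlib

open scoped MatrixGroups

section helpers
open Matrix

lemma exists_coprime_shift (c d N : ℤ) (hc : c ≠ 0)
    (h : ∀ p : ℕ, p.Prime → (p : ℤ) ∣ c → (p : ℤ) ∣ d → ¬ (p : ℤ) ∣ N) :
    ∃ t : ℤ, IsCoprime c (d + t * N) := by
  classical
  set T : Finset ℕ := c.natAbs.primeFactors.filter (fun p => ¬ (p : ℤ) ∣ d) with hT
  refine ⟨((T.prod id : ℕ) : ℤ), ?_⟩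
  rw [Int.isCoprime_iff_gcd_eq_one]
  by_contra hg
  obtain ⟨p, pp, hpg⟩ := Nat.exists_prime_and_dvd hg
  have hpc : (p : ℤ) ∣ c :=
    dvd_trans (Int.natCast_dvd_natCast.mpr hpg) (Int.gcd_dvd_left _ _)
  have hpd' : (p : ℤ) ∣ d + (T.prod id : ℕ) * N :=
    dvd_trans (Int.natCast_dvd_natCast.mpr hpg) (Int.gcd_dvd_right _ _)
  by_cases hpd : (p : ℤ) ∣ d
  · -- then p ∤ N and p ∤ T.prod
    have hpN : ¬ (p : ℤ) ∣ N := h p pp hpc hpd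
    have hpt : ¬ (p : ℤ) ∣ ((T.prod id : ℕ) : ℤ) := by
      rw [Int.natCast_dvd_natCast]
      intro hdvd
      obtain ⟨q, hqT, hpq⟩ := (Prime.dvd_finset_prod_iff pp.prime id).mp hdvd
      rw [hT, Finset.mem_filter] at hqT
      have : p = q := ((Nat.prime_dvd_prime_iff_eq pp
        (Nat.prime_of_mem_primeFactors hqT.1)).mp hpq)
      subst this
      exact hqT.2 hpd
    have : (p : ℤ) ∣ ((T.prod id : ℕ) : ℤ) * N := by
      have := dvd_sub hpd' hpd
      simpa using this
    rcases ((Nat.prime_iff_prime_int.mp pp).dvd_mul.mp this) with h1 | h1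
    · exact hpt h1
    · exact hpN h1
  · -- p ∣ T.prod, hence p ∣ d, contradiction
    have hpT : p ∈ T := by
      rw [hT, Finset.mem_filter]
      exact ⟨Nat.mem_primeFactors.mpr ⟨pp, (by simpa using Int.natAbs_dvd_natAbs.mpr hpc),
        Int.natAbs_ne_zero.mpr hc⟩, hpd⟩
    have hpt : (p : ℤ) ∣ ((T.prod id : ℕ) : ℤ) :=
      Int.natCast_dvd_natCast.mpr (Finset.dvd_prod_of_mem id hpT)
    have : (p : ℤ) ∣ d := by
      have := dvd_sub hpd' (hpt.mul_right N)
      simpa using this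
    exact hpd this

open scoped MatrixGroups

lemma SL2_map_surjective (N : ℕ) (hN : 0 < N) :
    Function.Surjective (Matrix.SpecialLinearGroup.map (Int.castRingHom (ZMod N)) :
      SL(2, ℤ) →* Matrix.SpecialLinearGroup (Fin 2) (ZMod N)) := by
  intro A
  obtain ⟨a, ha⟩ : ∃ a : ℤ, (a : ZMod N) = A.1 0 0 := ⟨(A.1 0 0).cast, ZMod.intCast_zmod_cast _⟩
  obtain ⟨b, hb⟩ : ∃ b : ℤ, (b : ZMod N) = A.1 0 1 := ⟨(A.1 0 1).cast, ZMod.intCast_zmod_cast _⟩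
  obtain ⟨c, hc⟩ : ∃ c : ℤ, (c : ZMod N) = A.1 1 0 := ⟨(A.1 1 0).cast, ZMod.intCast_zmod_cast _⟩
  obtain ⟨d, hd⟩ : ∃ d : ℤ, (d : ZMod N) = A.1 1 1 := ⟨(A.1 1 1).cast, ZMod.intCast_zmod_cast _⟩
  have hdet : ((a * d - b * c - 1 : ℤ) : ZMod N) = 0 := by
    have h1 : A.1.det = 1 := A.2
    rw [Matrix.det_fin_two] at h1
    push_cast
    rw [ha, hb, hc, hd, h1]
    ring
  rw [ZMod.intCast_zmod_eq_zero_iff_dvd] at hdet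
  set c₀ : ℤ := if c = 0 then (N : ℤ) else c with hc₀def
  have hc₀ : c₀ ≠ 0 := by
    rw [hc₀def]; split
    · exact_mod_cast hN.ne'
    · assumption
  have hc₀cast : ((c₀ : ℤ) : ZMod N) = A.1 1 0 := by
    rw [hc₀def]; split
    · rename_i h0; simp [← hc, h0]
    · exact hc
  have hNc₀ : (N : ℤ) ∣ c₀ - c := by
    rw [hc₀def]; split
    · rename_i h0; simp [h0]
    · simp
  obtain ⟨t, hcop⟩ := exists_coprime_shift c₀ d N hc₀ (by
    intro p pp hpc hpd hpN
    have hpc' : (p : ℤ) ∣ c := by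
      rcases hNc₀ with ⟨u, hu⟩
      have : c = c₀ - N * u := by linarith
      rw [this]
      exact dvd_sub hpc ((hpN.mul_right u))
    have h1 : (p : ℤ) ∣ a * d - b * c := dvd_sub ((hpd.mul_left a)) ((hpc'.mul_left b))
    have h2 : (p : ℤ) ∣ a * d - b * c - 1 := hpN.trans hdet
    have : (p : ℤ) ∣ 1 := by
      have := dvd_sub h1 h2
      simpa using this
    have : p ∣ 1 := by exact_mod_cast this
    exact pp.one_lt.ne' (Nat.dvd_one.mp this))
  set d' : ℤ := d + t * N with hd'def
  have hd'cast : ((d' : ℤ) : ZMod N) = A.1 1 1 := by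
    rw [hd'def]; push_cast; simp [ZMod.natCast_self, hd]
  have hdet' : ((a * d' - b * c₀ - 1 : ℤ) : ZMod N) = 0 := by
    push_cast
    rw [ha, hb, hc₀cast, hd'cast]
    have h1 : A.1.det = 1 := A.2
    rw [Matrix.det_fin_two] at h1
    rw [h1]; ring
  rw [ZMod.intCast_zmod_eq_zero_iff_dvd] at hdet'
  obtain ⟨k, hk⟩ := hdet'
  obtain ⟨x, y, hxy⟩ := hcop
  refine ⟨⟨!![a - N * (k * y), b + N * (k * x); c₀, d'], ?_⟩, ?_⟩
  · rw [Matrix.det_fin_two_of]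
    linear_combination hk - (N : ℤ) * k * hxy
  · ext i j
    fin_cases i <;> fin_cases j <;>
      (erw [Matrix.SpecialLinearGroup.map_apply_coe]; simp [ZMod.natCast_self, ha, hb, hc₀cast, hd'cast])

lemma card_ker_castHom (p k : ℕ) (pp : p.Prime) (hk : k ≠ 0) :
    Nat.card {x : ZMod (p^k) // ZMod.castHom (dvd_pow_self p hk) (ZMod p) x = 0}
      = p ^ (k - 1) := by
  haveI : Fact p.Prime := ⟨pp⟩
  haveI : NeZero (p^k) := ⟨pow_ne_zero k pp.pos.ne'⟩
  set φ : ZMod (p^k) →+* ZMod p := ZMod.castHom (dvd_pow_self p hk) (ZMod p) with hφ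
  have hsurj : Function.Surjective φ.toAddMonoidHom := by
    intro y
    refine ⟨(y.val : ZMod (p^k)), ?_⟩
    simp only [RingHom.toAddMonoidHom_eq_coe, AddMonoidHom.coe_coe, hφ, map_natCast]
    exact ZMod.natCast_rightInverse y
  have h1 : (φ.toAddMonoidHom.ker).index * Nat.card φ.toAddMonoidHom.ker
      = Nat.card (ZMod (p^k)) := AddSubgroup.index_mul_card _
  have h2 : (φ.toAddMonoidHom.ker).index = p := by
    rw [AddSubgroup.index_ker]
    rw [AddMonoidHom.range_eq_top_of_surjective _ hsurj, AddSubgroup.card_top, Nat.card_zmod]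
  have h3 : Nat.card φ.toAddMonoidHom.ker
      = Nat.card {x : ZMod (p^k) // φ x = 0} := by
    apply Nat.card_congr
    exact Equiv.subtypeEquivRight (fun x => by
      simp [AddMonoidHom.mem_ker])
  rw [h2, h3] at h1
  rw [Nat.card_zmod] at h1
  have hp : p ≠ 0 := pp.pos.ne'
  have hpk : p ^ k = p * p ^ (k - 1) := by
    conv_lhs => rw [show k = 1 + (k - 1) by omega]
    rw [pow_add, pow_one]
  exact Nat.eq_of_mul_eq_mul_left pp.pos (h1.trans hpk)


lemma card_SL2_prime_pow (p k : ℕ) (pp : p.Prime) (hk : k ≠ 0) :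
    Nat.card (Matrix.SpecialLinearGroup (Fin 2) (ZMod (p^k)))
      = p ^ (3*k - 2) * (p^2 - 1) := by
  haveI : Fact p.Prime := ⟨pp⟩
  haveI : NeZero (p^k) := ⟨pow_ne_zero k pp.pos.ne'⟩
  set φ : ZMod (p^k) →+* ZMod p := ZMod.castHom (dvd_pow_self p hk) (ZMod p) with hφ
  -- unit criterion
  have hunit : ∀ x : ZMod (p^k), IsUnit x ↔ φ x ≠ 0 := by
    intro x
    conv_lhs => rw [← ZMod.natCast_zmod_val x]
    rw [ZMod.isUnit_iff_coprime]
    rw [Nat.coprime_pow_right_iff (Nat.pos_of_ne_zero hk)]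
    rw [Nat.coprime_comm, pp.coprime_iff_not_dvd]
    have : φ x = (x.val : ZMod p) := by
      conv_lhs => rw [← ZMod.natCast_zmod_val x]
      simp [hφ, map_natCast]
    rw [this, Ne, ZMod.natCast_eq_zero_iff]
  -- in SL2, the bottom row has a unit
  have key : ∀ A : Matrix.SpecialLinearGroup (Fin 2) (ZMod (p^k)),
      IsUnit (A.1 1 0) ∨ IsUnit (A.1 1 1) := by
    intro A
    by_contra hcon
    push_neg at hcon
    obtain ⟨h1, h2⟩ := hcon
    rw [hunit, not_not] at h1 h2
    have hdet : A.1.det = 1 := A.2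
    rw [Matrix.det_fin_two] at hdet
    have : (1 : ZMod p) = 0 := by
      have := congrArg φ hdet
      rw [_root_.map_one, map_sub, _root_.map_mul, _root_.map_mul, h1, h2] at this
      simpa using this.symm
    exact one_ne_zero this
  -- the equivalence
  let U := {v : ZMod (p^k) × ZMod (p^k) // IsUnit v.1 ∨ IsUnit v.2}
  let e : Matrix.SpecialLinearGroup (Fin 2) (ZMod (p^k)) ≃ ZMod (p^k) × U :=
    { toFun := fun A => ((if IsUnit (A.1 1 1) then A.1 0 1 else A.1 0 0),
        ⟨(A.1 1 0, A.1 1 1), key A⟩)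
      invFun := fun x =>
        if hd : IsUnit x.2.1.2 then
          ⟨!![(1 + x.1 * x.2.1.1) * Ring.inverse x.2.1.2, x.1; x.2.1.1, x.2.1.2], by
            rw [Matrix.det_fin_two_of]
            have h := Ring.mul_inverse_cancel x.2.1.2 hd
            linear_combination (1 + x.1 * x.2.1.1) * h⟩
        else
          ⟨!![x.1, (x.1 * x.2.1.2 - 1) * Ring.inverse x.2.1.1; x.2.1.1, x.2.1.2], by
            rw [Matrix.det_fin_two_of]
            have hc : IsUnit x.2.1.1 := x.2.2.resolve_right hd
            have h := Ring.inverse_mul_cancel x.2.1.1 hc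
            linear_combination (1 - x.1 * x.2.1.2) * h⟩
      left_inv := fun A => by
        have hdet : A.1 0 0 * A.1 1 1 - A.1 0 1 * A.1 1 0 = 1 := by
          have h2 := A.2; rwa [Matrix.det_fin_two] at h2
        by_cases hd : IsUnit (A.1 1 1)
        · apply Subtype.ext
          simp only [hd, if_true, dite_true]
          erw [dif_pos hd]
          ext i j
          fin_cases i <;> fin_cases j <;>
            simp only [Matrix.cons_val', Matrix.cons_val_zero, Matrix.cons_val_one,
              Matrix.head_cons, Matrix.empty_val', Matrix.cons_val_fin_one, Matrix.head_fin_const,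
              Matrix.of_apply, Fin.zero_eta, Fin.mk_one]
          · have h := Ring.mul_inverse_cancel (A.1 1 1) hd
            linear_combination (-(Ring.inverse (A.1 1 1))) * hdet + (A.1 0 0) * h
        · apply Subtype.ext
          simp only [hd, if_false, dite_false]
          erw [dif_neg hd]
          ext i j
          fin_cases i <;> fin_cases j <;>
            simp only [Matrix.cons_val', Matrix.cons_val_zero, Matrix.cons_val_one,
              Matrix.head_cons, Matrix.empty_val', Matrix.cons_val_fin_one, Matrix.head_fin_const,
              Matrix.of_apply, Fin.zero_eta, Fin.mk_one]
          · have hc : IsUnit (A.1 1 0) := (key A).resolve_right hd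
            have h := Ring.mul_inverse_cancel (A.1 1 0) hc
            linear_combination (Ring.inverse (A.1 1 0)) * hdet + (A.1 0 1) * h
      right_inv := fun x => by
        obtain ⟨x1, ⟨⟨c, d⟩, hv⟩⟩ := x
        by_cases hd : IsUnit d
        · simp only [dif_pos hd]
          refine Prod.ext ?_ (Subtype.ext ?_) <;> simp [hd]
        · simp only [dif_neg hd]
          refine Prod.ext ?_ (Subtype.ext ?_) <;> simp [hd] }
  have hcard := Nat.card_congr e
  rw [Nat.card_prod, Nat.card_zmod] at hcard
  have hU : Nat.card U = p^(2*k) - p^(2*k - 2) := by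
    have e2 : U ≃ {v : ZMod (p^k) × ZMod (p^k) // ¬ (φ v.1 = 0 ∧ φ v.2 = 0)} :=
      Equiv.subtypeEquivRight (fun v => by rw [hunit v.1, hunit v.2]; tauto)
    rw [Nat.card_congr e2, Nat.card_eq_fintype_card, Fintype.card_subtype_compl,
      Fintype.card_prod, ZMod.card]
    have e3 : {v : ZMod (p^k) × ZMod (p^k) // φ v.1 = 0 ∧ φ v.2 = 0}
        ≃ {x : ZMod (p^k) // φ x = 0} × {x : ZMod (p^k) // φ x = 0} :=
      Equiv.subtypeProdEquivProd (p := fun x : ZMod (p^k) => φ x = 0)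
        (q := fun x : ZMod (p^k) => φ x = 0)
    have h4 : Fintype.card {v : ZMod (p^k) × ZMod (p^k) // φ v.1 = 0 ∧ φ v.2 = 0}
        = p^(k-1) * p^(k-1) := by
      rw [← Nat.card_eq_fintype_card, Nat.card_congr e3, Nat.card_prod,
        card_ker_castHom p k pp hk]
    rw [h4, ← pow_add, ← pow_add]
    congr 2 <;> omega
  rw [hU] at hcard
  rw [hcard]
  rw [show p ^ (2*k) = p^(2*k-2) * p^2 from by rw [← pow_add]; congr 1; omega]
  rw [show p^(2*k-2) * p^2 - p^(2*k-2) = p^(2*k-2) * (p^2 - 1) from by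
    rw [Nat.mul_sub_left_distrib, mul_one]]
  rw [← mul_assoc, ← pow_add]
  congr 2
  omega

lemma card_SL2_mul (m n : ℕ) (h : m.Coprime n) :
    Nat.card (Matrix.SpecialLinearGroup (Fin 2) (ZMod (m*n)))
      = Nat.card (Matrix.SpecialLinearGroup (Fin 2) (ZMod m))
        * Nat.card (Matrix.SpecialLinearGroup (Fin 2) (ZMod n)) := by
  let e := ZMod.chineseRemainder h
  let f1 : ZMod (m*n) →+* ZMod m := (RingHom.fst _ _).comp e.toRingHom
  let f2 : ZMod (m*n) →+* ZMod n := (RingHom.snd _ _).comp e.toRingHom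
  let E : Matrix.SpecialLinearGroup (Fin 2) (ZMod (m*n))
      ≃ Matrix.SpecialLinearGroup (Fin 2) (ZMod m)
        × Matrix.SpecialLinearGroup (Fin 2) (ZMod n) :=
  { toFun := fun A =>
      (Matrix.SpecialLinearGroup.map f1 A, Matrix.SpecialLinearGroup.map f2 A)
    invFun := fun X => ⟨Matrix.of fun i j => e.symm (X.1.1 i j, X.2.1 i j), by
      have hM : (Matrix.of fun i j => (X.1.1 i j, X.2.1 i j) :
          Matrix (Fin 2) (Fin 2) (ZMod m × ZMod n)).det = 1 := by
        have h1 := (RingHom.fst (ZMod m) (ZMod n)).map_det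
          (Matrix.of fun i j => (X.1.1 i j, X.2.1 i j))
        have h2 := (RingHom.snd (ZMod m) (ZMod n)).map_det
          (Matrix.of fun i j => (X.1.1 i j, X.2.1 i j))
        have e1 : ((RingHom.fst (ZMod m) (ZMod n)).mapMatrix
            (Matrix.of fun i j => (X.1.1 i j, X.2.1 i j))) = X.1.1 := by ext i j; rfl
        have e2 : ((RingHom.snd (ZMod m) (ZMod n)).mapMatrix
            (Matrix.of fun i j => (X.1.1 i j, X.2.1 i j))) = X.2.1 := by ext i j; rfl
        refine Prod.ext ?_ ?_
        · rw [show ((Matrix.of fun i j => (X.1.1 i j, X.2.1 i j)).det).1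
            = (RingHom.fst (ZMod m) (ZMod n)) (Matrix.of fun i j =>
              (X.1.1 i j, X.2.1 i j)).det from rfl, h1, e1, X.1.2]; rfl
        · rw [show ((Matrix.of fun i j => (X.1.1 i j, X.2.1 i j)).det).2
            = (RingHom.snd (ZMod m) (ZMod n)) (Matrix.of fun i j =>
              (X.1.1 i j, X.2.1 i j)).det from rfl, h2, e2, X.2.2]; rfl
      have : (Matrix.of fun i j => e.symm (X.1.1 i j, X.2.1 i j))
          = e.symm.mapMatrix (Matrix.of fun i j => (X.1.1 i j, X.2.1 i j)) := rfl
      rw [this, ← RingEquiv.map_det, hM, _root_.map_one]⟩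
    left_inv := fun A => by
      apply Subtype.ext
      ext i j
      simp only [f1, f2, e, Matrix.SpecialLinearGroup.map_apply_coe,
        RingHom.mapMatrix_apply, Matrix.map_apply, RingHom.coe_comp, Function.comp_apply,
        RingHom.coe_fst, RingHom.coe_snd, RingEquiv.toRingHom_eq_coe, RingEquiv.coe_toRingHom,
        Matrix.of_apply]
      exact (ZMod.chineseRemainder h).symm_apply_apply _
    right_inv := fun X => by
      refine Prod.ext (Subtype.ext ?_) (Subtype.ext ?_) <;>
      · ext i j
        erw [Matrix.SpecialLinearGroup.map_apply_coe]
        simp only [f1, f2, e, Matrix.SpecialLinearGroup.map_apply_coe,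
          RingHom.mapMatrix_apply, Matrix.map_apply, RingHom.coe_comp, Function.comp_apply,
          RingHom.coe_fst, RingHom.coe_snd, RingEquiv.toRingHom_eq_coe,
          RingEquiv.coe_toRingHom, Matrix.of_apply,
          RingEquiv.apply_symm_apply] }
  rw [Nat.card_congr E, Nat.card_prod]

lemma card_SL2_rat (N : ℕ) (hN : 0 < N) :
    ((Nat.card (Matrix.SpecialLinearGroup (Fin 2) (ZMod N)) : ℕ) : ℚ)
      = N ^ 3 * ∏ p ∈ N.primeFactors, (1 - 1 / (p : ℚ) ^ 2) := by
  induction N using Nat.recOnPosPrimePosCoprime with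
  | prime_pow p n hp hn =>
    have pp : p.Prime := hp
    rw [card_SL2_prime_pow p n pp hn.ne', Nat.primeFactors_prime_pow hn.ne' hp,
      Finset.prod_singleton]
    have hp1 : (1:ℕ) ≤ p^2 := Nat.one_le_pow _ _ pp.pos
    have hpq : (p:ℚ) ≠ 0 := Nat.cast_ne_zero.mpr pp.pos.ne'
    push_cast [hp1]
    rw [← pow_mul, show n * 3 = (3*n-2)+2 by omega, pow_add]
    field_simp
  | zero => exact absurd hN (by omega)
  | one =>
    haveI : Subsingleton (Matrix.SpecialLinearGroup (Fin 2) (ZMod 1)) :=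
      ⟨fun A B => Subtype.ext (Subsingleton.elim _ _)⟩
    haveI : Unique (Matrix.SpecialLinearGroup (Fin 2) (ZMod 1)) :=
      ⟨⟨1⟩, fun a => Subsingleton.elim a 1⟩
    rw [Nat.card_unique]
    simp
  | coprime a b ha hb hab Pa Pb =>
    rw [card_SL2_mul a b hab]
    have ha0 : a ≠ 0 := by omega
    have hb0 : b ≠ 0 := by omega
    rw [Nat.primeFactors_mul ha0 hb0,
      Finset.prod_union (hab.disjoint_primeFactors)]
    push_cast
    rw [Pa (by omega), Pb (by omega)]
    ring

end helpers

/-- The index of Γ(N) in SL(2,ℤ) equals N³ ∏_{p ∣ N prime} (1 − 1/p²). -/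
theorem gamma_index (N : ℕ) (hN : 0 < N) :
    ((Matrix.SpecialLinearGroup.map (Int.castRingHom (ZMod N)) :
        SL(2, ℤ) →* Matrix.SpecialLinearGroup (Fin 2) (ZMod N)).ker.index : ℚ)
      = N ^ 3 * ∏ p ∈ N.primeFactors, (1 - 1 / (p : ℚ) ^ 2) := by
  rw [Subgroup.index_ker,
    MonoidHom.range_eq_top.mpr (SL2_map_surjective N hN),
    Subgroup.card_top]
  exact card_SL2_rat N hN
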